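/- arXiv:1108.5784 — 7 statements merged into one kernel-verified Lean document; each statement's English description precedes it below -/
import Mathlib

section
/- Let 0 ≤ m₀ ≤ m₁ be real numbers and let k ≥ 1 be a natural number. Define the Poisson-based probability of correct decision with equiprobable states as P_c = (1/2)·(∑_{x=k}^∞ Poi(x;m₁) + ∑_{x=0}^{k-1} Poi(x;m₀)), and define the vector (Helstrom) probability of correct decision as Q_c = (1/2)·(1 + √(1 − e^{−(m₁−m₀)})). Then Q_c ≥ P_c. -/
/-!
Writing `F m = ∑_{x<k} poi m x`, the Poisson probability of correct decision is
`(1 + F m₀ - F m₁) / 2`. Since `poi m₁ x / poi m₀ x = e^{-(m₁-m₀)} (m₁/m₀)^x ≥ e^{-(m₁-m₀)}`,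
we get `F m₀ - F m₁ ≤ (1 - e^{-(m₁-m₀)}) F m₀ ≤ 1 - e^{-(m₁-m₀)}`, and `a ≤ √a` on `[0, 1]`.
-/

/-- Poisson probability mass function with mean `m` evaluated at `x`
(with the convention `0 ^ 0 = 1`). -/
noncomputable def poi (m : ℝ) (x : ℕ) : ℝ := Real.exp (-m) * m ^ x / (Nat.factorial x)

open Finset

theorem HasSum.ite_le_sub_sum_range {G : Type*} [AddCommGroup G] [TopologicalSpace G]
    [IsTopologicalAddGroup G] {f : ℕ → G} {a : G} (hf : HasSum f a) (k : ℕ) :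
    HasSum (fun x => if k ≤ x then f x else 0) (a - ∑ x ∈ range k, f x) := by
  have hhead : ∑ x ∈ range k, (if k ≤ x then f x else 0) = 0 :=
    sum_eq_zero fun x hx => if_neg (not_le.2 (mem_range.1 hx))
  rw [← hasSum_nat_add_iff' k, hhead, sub_zero]
  simpa using (hasSum_nat_add_iff' k).2 hf

theorem hasSum_poi (m : ℝ) : HasSum (poi m) 1 := by
  unfold poi
  have h := (NormedSpace.expSeries_div_hasSum_exp m).mul_left (Real.exp (-m))
  rw [← Real.exp_eq_exp_ℝ, ← Real.exp_add, neg_add_cancel, Real.exp_zero] at h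
  simpa only [mul_div_assoc] using h

theorem poi_nonneg {m : ℝ} (hm : 0 ≤ m) (x : ℕ) : 0 ≤ poi m x := by
  unfold poi
  positivity

theorem sum_poi_le_one {m : ℝ} (hm : 0 ≤ m) (s : Finset ℕ) : ∑ x ∈ s, poi m x ≤ 1 :=
  sum_le_hasSum s (fun x _ => poi_nonneg hm x) (hasSum_poi m)

theorem exp_neg_sub_mul_poi_le {m₀ m₁ : ℝ} (hm₀ : 0 ≤ m₀) (hm : m₀ ≤ m₁) (x : ℕ) :
    Real.exp (-(m₁ - m₀)) * poi m₀ x ≤ poi m₁ x := by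
  have hexp : Real.exp (-(m₁ - m₀)) * Real.exp (-m₀) = Real.exp (-m₁) := by
    rw [← Real.exp_add]; ring_nf
  unfold poi
  rw [← mul_div_assoc, ← mul_assoc, hexp]
  gcongr

theorem sum_poi_sub_sum_poi_le {m₀ m₁ : ℝ} (hm₀ : 0 ≤ m₀) (hm : m₀ ≤ m₁) (s : Finset ℕ) :
    ∑ x ∈ s, poi m₀ x - ∑ x ∈ s, poi m₁ x ≤ 1 - Real.exp (-(m₁ - m₀)) := by
  have hmass : ∑ x ∈ s, poi m₀ x ≤ 1 := sum_poi_le_one hm₀ s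
  have hdom : Real.exp (-(m₁ - m₀)) * ∑ x ∈ s, poi m₀ x ≤ ∑ x ∈ s, poi m₁ x := by
    rw [mul_sum]
    exact sum_le_sum fun x _ => exp_neg_sub_mul_poi_le hm₀ hm x
  have hexp : Real.exp (-(m₁ - m₀)) ≤ 1 := Real.exp_le_one_iff.2 (by linarith)
  calc ∑ x ∈ s, poi m₀ x - ∑ x ∈ s, poi m₁ x
      ≤ (1 - Real.exp (-(m₁ - m₀))) * ∑ x ∈ s, poi m₀ x := by linarith
    _ ≤ 1 - Real.exp (-(m₁ - m₀)) :=
      mul_le_of_le_one_right (sub_nonneg.2 hexp) hmass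

theorem vector_prob_correct_ge_poisson_general (m₀ m₁ : ℝ) (hm₀ : 0 ≤ m₀) (hm : m₀ ≤ m₁)
    (k : ℕ) :
    (1 / 2) * (1 + Real.sqrt (1 - Real.exp (-(m₁ - m₀)))) ≥
      (1 / 2) * ((∑' x : ℕ, if k ≤ x then poi m₁ x else 0) +
        ∑ x ∈ Finset.range k, poi m₀ x) := by
  rw [((hasSum_poi m₁).ite_le_sub_sum_range k).tsum_eq]
  have hgap := sum_poi_sub_sum_poi_le hm₀ hm (range k)
  have hsqrt : 1 - Real.exp (-(m₁ - m₀)) ≤ Real.sqrt (1 - Real.exp (-(m₁ - m₀))) :=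
    Real.le_sqrt_self_iff.2 (by linarith [Real.exp_pos (-(m₁ - m₀))])
  linarith

/-- The vector (Helstrom) probability of correct decision is at least the Poisson-based
probability of correct decision, for equiprobable states. -/
theorem vector_prob_correct_ge_poisson (m₀ m₁ : ℝ) (hm₀ : 0 ≤ m₀) (hm : m₀ ≤ m₁)
    (k : ℕ) (hk : 1 ≤ k) :
    (1 / 2) * (1 + Real.sqrt (1 - Real.exp (-(m₁ - m₀)))) ≥
      (1 / 2) * ((∑' x : ℕ, if k ≤ x then poi m₁ x else 0) +
        ∑ x ∈ Finset.range k, poi m₀ x) :=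
  vector_prob_correct_ge_poisson_general m₀ m₁ hm₀ hm k
end

section
/- Let ξ ∈ [0,1], let γ ∈ [0, π/2], and let η₀, η₁ ≥ 0 be real numbers satisfying η₀ + γ + η₁ = π/2. Then ξ·sin²η₀ + (1 − ξ)·sin²η₁ ≥ (1/2)·(1 − √(1 − 4ξ(1 − ξ)·cos²γ)). -/
open Real

/-- The probability of error of any decision rule with angles `η₀, η₁` around state vectors
forming angle `γ` is at least the Helstrom probability of error. -/
theorem prob_error_ge_helstrom (ξ γ η₀ η₁ : ℝ)
    (hξ : ξ ∈ Set.Icc (0 : ℝ) 1) (hγ : γ ∈ Set.Icc (0 : ℝ) (π / 2))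
    (hη₀ : 0 ≤ η₀) (hη₁ : 0 ≤ η₁) (hsum : η₀ + γ + η₁ = π / 2) :
    ξ * Real.sin η₀ ^ 2 + (1 - ξ) * Real.sin η₁ ^ 2 ≥
      (1 / 2) * (1 - Real.sqrt (1 - 4 * ξ * (1 - ξ) * Real.cos γ ^ 2)) := by
  set A : ℝ := ξ - (1 - ξ) * Real.cos (2 * γ) with hA
  set B : ℝ := (1 - ξ) * Real.sin (2 * γ) with hB
  set X : ℝ := 1 - 4 * ξ * (1 - ξ) * Real.cos γ ^ 2 with hX
  have hXAB : X = A ^ 2 + B ^ 2 := by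
    have h1 : Real.cos (2 * γ) = 2 * Real.cos γ ^ 2 - 1 := Real.cos_two_mul γ
    have h2 : Real.sin (2 * γ) ^ 2 = 1 - Real.cos (2 * γ) ^ 2 := by
      have := Real.sin_sq_add_cos_sq (2 * γ); nlinarith
    simp only [hX, hA, hB]
    have h3 : ((1 - ξ) * Real.sin (2 * γ)) ^ 2 = (1 - ξ) ^ 2 * (1 - Real.cos (2 * γ) ^ 2) := by
      rw [mul_pow, h2]
    rw [h3, h1]; ring
  -- cos(2η₁) = -cos(2γ + 2η₀)
  have hc1 : Real.cos (2 * η₁) = -(Real.cos (2 * γ) * Real.cos (2 * η₀)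
      - Real.sin (2 * γ) * Real.sin (2 * η₀)) := by
    have h : 2 * η₁ = π - (2 * γ + 2 * η₀) := by linarith
    rw [h, Real.cos_pi_sub, Real.cos_add]
  have hkey : ξ * Real.cos (2 * η₀) + (1 - ξ) * Real.cos (2 * η₁) ≤ Real.sqrt X := by
    have hpy : Real.cos (2 * η₀) ^ 2 + Real.sin (2 * η₀) ^ 2 = 1 := by
      have := Real.sin_sq_add_cos_sq (2 * η₀); linarith
    have hXnn : 0 ≤ X := by rw [hXAB]; positivity
    have hs1 : Real.sqrt X ^ 2 = X := Real.sq_sqrt hXnn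
    have hs2 : 0 ≤ Real.sqrt X := Real.sqrt_nonneg X
    have hlhs : ξ * Real.cos (2 * η₀) + (1 - ξ) * Real.cos (2 * η₁)
        = A * Real.cos (2 * η₀) + B * Real.sin (2 * η₀) := by
      rw [hc1]; ring
    rw [hlhs]
    nlinarith [sq_nonneg (A * Real.sin (2 * η₀) - B * Real.cos (2 * η₀)),
      sq_nonneg (A * Real.cos (2 * η₀) + B * Real.sin (2 * η₀) - Real.sqrt X),
      sq_nonneg (A * Real.cos (2 * η₀) + B * Real.sin (2 * η₀) + Real.sqrt X), hXAB]
  have hsin0 : Real.sin η₀ ^ 2 = (1 - Real.cos (2 * η₀)) / 2 := by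
    have := Real.cos_two_mul η₀
    have := Real.sin_sq_add_cos_sq η₀; nlinarith
  have hsin1 : Real.sin η₁ ^ 2 = (1 - Real.cos (2 * η₁)) / 2 := by
    have := Real.cos_two_mul η₁
    have := Real.sin_sq_add_cos_sq η₁; nlinarith
  have hξ0 := hξ.1; have hξ1 := hξ.2
  rw [hsin0, hsin1]
  nlinarith [hkey]
end

section
/- Let ξ ∈ [0,1] and γ ∈ [0, π/2]. Then the infimum over all η₀ ∈ [0, π/2 − γ] of ξ·sin²η₀ + (1 − ξ)·sin²(π/2 − γ − η₀) is attained and equals (1/2)·(1 − √(1 − 4ξ(1 − ξ)·cos²γ)). -/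
/-!
Using `sin² x = (1 - cos 2x) / 2`, the probability of error at `η₀` is `(1 - g (2 η₀)) / 2` with
`g θ = ξ cos θ + (1 - ξ) cos (α - θ)` and `α = π - 2γ`. Now `g θ = Re (v e^{-iθ})` for
`v = ξ + (1 - ξ) e^{iα}`, so `g ≤ ‖v‖`, with equality at `θ = arg v`. This angle lies in `[0, α]`
because `v` is a convex combination of `1` and `e^{iα}`, and `‖v‖² = 1 - 4ξ(1 - ξ) cos² γ`.
-/

open Real Set

section

open Complex

theorem arg_ofReal_add_mul_exp_mem_Icc {t α : ℝ} (ht : t ∈ Icc 0 1) (hα : α ∈ Icc 0 π) :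
    arg (t + (1 - t) * exp (α * I)) ∈ Icc 0 α := by
  set w : ℂ := (1 - t) * exp (α * I)
  set v : ℂ := t + w
  have hw_norm : ‖w‖ = 1 - t := by
    rw [norm_mul, norm_exp_ofReal_mul_I, mul_one, ← ofReal_one, ← ofReal_sub, norm_real,
      Real.norm_of_nonneg (by linarith [ht.2])]
  have ht_norm : ‖(t : ℂ)‖ = t := by rw [norm_real, Real.norm_of_nonneg ht.1]
  have hre : v.re = t + (1 - t) * Real.cos α := by simp [v, w, exp_ofReal_mul_I_re]
  have him : 0 ≤ v.im := by
    have : v.im = (1 - t) * Real.sin α := by simp [v, w, exp_ofReal_mul_I_im]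
    rw [this]
    exact mul_nonneg (by linarith [ht.2]) (sin_nonneg_of_nonneg_of_le_pi hα.1 hα.2)
  rcases eq_or_ne v 0 with hv | hv
  · simpa [hv] using hα.1
  refine ⟨arg_nonneg_iff.2 him, ?_⟩
  rw [arg_of_im_nonneg_of_ne_zero him hv, ← arccos_cos hα.1 hα.2]
  refine arccos_le_arccos ((le_div_iff₀ (norm_pos_iff.2 hv)).2 ?_)
  have hle : ‖v‖ ≤ 1 := by linarith [norm_add_le (t : ℂ) w]
  have hge : 1 - 2 * t ≤ ‖v‖ := by
    have : ‖w‖ ≤ ‖v‖ + ‖(t : ℂ)‖ := by simpa [v] using norm_sub_le v t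
    linarith
  rw [hre]
  rcases le_total 0 (Real.cos α) with hc | hc
  · nlinarith [Real.cos_le_one α]
  · nlinarith [Real.neg_one_le_cos α, ht.1]

theorem mul_cos_add_mul_cos_sub_eq_re (t α θ : ℝ) :
    t * Real.cos θ + (1 - t) * Real.cos (α - θ) =
      (((t : ℂ) + (1 - t) * exp (α * I)) * exp (-θ * I)).re := by
  have hθ : -(θ : ℂ) * I = (-θ : ℝ) * I := by push_cast; ring
  have hαθ : (α : ℂ) * I + (-θ : ℝ) * I = (α - θ : ℝ) * I := by push_cast; ring
  rw [hθ, add_mul, mul_assoc, ← Complex.exp_add, hαθ, ← ofReal_one, ← ofReal_sub, add_re,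
    re_ofReal_mul, re_ofReal_mul, exp_ofReal_mul_I_re, exp_ofReal_mul_I_re, Real.cos_neg]

theorem isGreatest_mul_cos_add_mul_cos_sub {t α : ℝ} (ht : t ∈ Icc 0 1) (hα : α ∈ Icc 0 π) :
    IsGreatest ((fun θ => t * Real.cos θ + (1 - t) * Real.cos (α - θ)) '' Icc 0 α)
      ‖(t : ℂ) + (1 - t) * exp (α * I)‖ := by
  simp only [mul_cos_add_mul_cos_sub_eq_re]
  set v : ℂ := t + (1 - t) * exp (α * I)
  refine ⟨⟨arg v, arg_ofReal_add_mul_exp_mem_Icc ht hα, ?_⟩, ?_⟩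
  · have hrot : v * exp (-arg v * I) = ‖v‖ := by
      rw [neg_mul, Complex.exp_neg, ← div_eq_mul_inv, div_eq_iff (Complex.exp_ne_zero _),
        norm_mul_exp_arg_mul_I]
    simp only [hrot, ofReal_re]
  · rintro _ ⟨θ, -, rfl⟩
    calc (v * exp (-θ * I)).re ≤ ‖v * exp (-θ * I)‖ := re_le_norm _
      _ = ‖v‖ := by rw [norm_mul, ← ofReal_neg, norm_exp_ofReal_mul_I, mul_one]

theorem norm_ofReal_add_mul_exp (t α : ℝ) :
    ‖(t : ℂ) + (1 - t) * exp (α * I)‖ = √(1 - 2 * t * (1 - t) * (1 - Real.cos α)) := by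
  rw [norm_def, normSq_apply]
  congr 1
  simp [exp_ofReal_mul_I_re, exp_ofReal_mul_I_im]
  linear_combination (1 - t) ^ 2 * Real.sin_sq_add_cos_sq α

end

theorem mul_sin_sq_add_mul_sin_sq (t x y : ℝ) :
    t * Real.sin x ^ 2 + (1 - t) * Real.sin y ^ 2 =
      (1 - (t * Real.cos (2 * x) + (1 - t) * Real.cos (2 * y))) / 2 := by
  rw [sin_sq_eq_half_sub, sin_sq_eq_half_sub]
  ring

/-- The infimum over all admissible angles `η₀` of the probability of error is attained
and equals the Helstrom probability of error. -/
theorem helstrom_is_least (ξ γ : ℝ)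
    (hξ : ξ ∈ Set.Icc (0 : ℝ) 1) (hγ : γ ∈ Set.Icc (0 : ℝ) (π / 2)) :
    IsLeast
      ((fun η₀ => ξ * Real.sin η₀ ^ 2 + (1 - ξ) * Real.sin (π / 2 - γ - η₀) ^ 2) ''
        Set.Icc 0 (π / 2 - γ))
      ((1 / 2) * (1 - Real.sqrt (1 - 4 * ξ * (1 - ξ) * Real.cos γ ^ 2))) := by
  set α := π - 2 * γ
  have hα : α ∈ Icc 0 π := ⟨by linarith [hγ.2], by linarith [hγ.1]⟩
  obtain ⟨⟨θ₀, hθ₀, hgθ₀⟩, hg_le⟩ := isGreatest_mul_cos_add_mul_cos_sub hξ hα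
  have hnorm : ‖(ξ : ℂ) + (1 - ξ) * Complex.exp (α * Complex.I)‖ =
      √(1 - 4 * ξ * (1 - ξ) * Real.cos γ ^ 2) := by
    rw [norm_ofReal_add_mul_exp, Real.cos_pi_sub, Real.cos_two_mul]
    ring_nf
  have herr (η : ℝ) : ξ * Real.sin η ^ 2 + (1 - ξ) * Real.sin (π / 2 - γ - η) ^ 2 =
      (1 - (ξ * Real.cos (2 * η) + (1 - ξ) * Real.cos (α - 2 * η))) / 2 := by
    rw [mul_sin_sq_add_mul_sin_sq, show 2 * (π / 2 - γ - η) = α - 2 * η by ring]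
  refine ⟨⟨θ₀ / 2, ⟨by linarith [hθ₀.1], by linarith [hθ₀.2]⟩, ?_⟩, ?_⟩
  · simp only [herr, mul_div_cancel₀ θ₀ two_ne_zero, hgθ₀, hnorm]
    ring
  · rintro _ ⟨η, hη, rfl⟩
    have hg := hg_le ⟨2 * η, ⟨by linarith [hη.1], by linarith [hη.2]⟩, rfl⟩
    simp only [herr, ← hnorm]
    linarith
end

section
/- Let V be a real inner product space of dimension 2, let m₀, m₁ ∈ V be unit vectors, let ξ ∈ [0,1], and let μ₀, μ₁ ∈ V be unit vectors with ⟨μ₀, μ₁⟩ = 0. Then ξ·⟨μ₁, m₀⟩² + (1 − ξ)·⟨μ₀, m₁⟩² ≥ (1/2)·(1 − √(1 − 4ξ(1 − ξ)·⟨m₀, m₁⟩²)). -/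
/-!
Expanding `m₀ = a μ₀ + b μ₁` and `m₁ = c μ₀ + d μ₁` in the orthonormal basis `μ₀, μ₁`, the
error probability is `P = ξ b² + (1 - ξ) c²`, and on the circles `a² + b² = c² + d² = 1`
the Helstrom discriminant satisfies
`1 - 4 ξ (1 - ξ) (a c + b d)² = (1 - 2 P)² + (2 ξ a b - 2 (1 - ξ) c d)²`.
Hence its square root is at least `1 - 2 P`.
-/

open RealInnerProductSpace Module

theorem Orthonormal.sum_inner_mul_inner_of_card_eq_finrank {𝕜 E ι : Type*} [RCLike 𝕜]
    [NormedAddCommGroup E] [InnerProductSpace 𝕜 E] [FiniteDimensional 𝕜 E] [Fintype ι]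
    {v : ι → E} (hv : Orthonormal 𝕜 v) (hcard : Fintype.card ι = finrank 𝕜 E) (x y : E) :
    ∑ i, inner 𝕜 x (v i) * inner 𝕜 (v i) y = inner 𝕜 x y := by
  have hspan := hv.linearIndependent.span_eq_top_of_card_eq_finrank' hcard
  simpa only [OrthonormalBasis.coe_mk] using
    (OrthonormalBasis.mk hv hspan.ge).sum_inner_mul_inner x y

theorem real_inner_eq_of_orthonormal_pair_of_finrank_eq_two {V : Type*}
    [NormedAddCommGroup V] [InnerProductSpace ℝ V] (hdim : finrank ℝ V = 2) {μ₀ μ₁ : V}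
    (hμ₀ : ‖μ₀‖ = 1) (hμ₁ : ‖μ₁‖ = 1) (horth : ⟪μ₀, μ₁⟫ = 0) (x y : V) :
    ⟪x, y⟫ = ⟪μ₀, x⟫ * ⟪μ₀, y⟫ + ⟪μ₁, x⟫ * ⟪μ₁, y⟫ := by
  have : FiniteDimensional ℝ V := .of_finrank_pos (by omega)
  have hon : Orthonormal ℝ ![μ₀, μ₁] := by
    simp [orthonormal_vecCons_iff, hμ₀, hμ₁, horth]
  have := hon.sum_inner_mul_inner_of_card_eq_finrank (by simp [hdim]) x y
  simp only [Fin.sum_univ_two, Matrix.cons_val_zero, Matrix.cons_val_one] at this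
  rw [← this, real_inner_comm x μ₀, real_inner_comm x μ₁]

theorem helstrom_discriminant_eq (a b c d ξ : ℝ) (h₀ : a ^ 2 + b ^ 2 = 1)
    (h₁ : c ^ 2 + d ^ 2 = 1) :
    1 - 4 * ξ * (1 - ξ) * (a * c + b * d) ^ 2 =
      (1 - 2 * (ξ * b ^ 2 + (1 - ξ) * c ^ 2)) ^ 2 + (2 * ξ * a * b - 2 * (1 - ξ) * c * d) ^ 2 := by
  linear_combination (-4 * ξ * c ^ 2 + 4 * ξ ^ 2 * c ^ 2 - 4 * ξ ^ 2 * b ^ 2) * h₀ +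
    (-4 * ξ * b ^ 2 + 4 * ξ ^ 2 * b ^ 2 - 4 * c ^ 2 + 8 * ξ * c ^ 2 - 4 * ξ ^ 2 * c ^ 2) * h₁

theorem helstrom_le_of_sq_add_sq_eq_one (a b c d ξ : ℝ) (h₀ : a ^ 2 + b ^ 2 = 1)
    (h₁ : c ^ 2 + d ^ 2 = 1) :
    (1 / 2) * (1 - √(1 - 4 * ξ * (1 - ξ) * (a * c + b * d) ^ 2)) ≤
      ξ * b ^ 2 + (1 - ξ) * c ^ 2 := by
  have hsq : (1 - 2 * (ξ * b ^ 2 + (1 - ξ) * c ^ 2)) ^ 2 ≤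
      1 - 4 * ξ * (1 - ξ) * (a * c + b * d) ^ 2 := by
    rw [helstrom_discriminant_eq a b c d ξ h₀ h₁]
    exact le_add_of_nonneg_right (sq_nonneg _)
  linarith [(le_abs_self _).trans (Real.abs_le_sqrt hsq)]

theorem prob_error_ge_helstrom_inner_general {V : Type*}
    [NormedAddCommGroup V] [InnerProductSpace ℝ V]
    (hdim : Module.finrank ℝ V = 2)
    (m₀ m₁ μ₀ μ₁ : V) (hm₀ : ‖m₀‖ = 1) (hm₁ : ‖m₁‖ = 1)
    (hμ₀ : ‖μ₀‖ = 1) (hμ₁ : ‖μ₁‖ = 1) (horth : ⟪μ₀, μ₁⟫ = 0)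
    (ξ : ℝ) :
    ξ * ⟪μ₁, m₀⟫ ^ 2 + (1 - ξ) * ⟪μ₀, m₁⟫ ^ 2 ≥
      (1 / 2) * (1 - Real.sqrt (1 - 4 * ξ * (1 - ξ) * ⟪m₀, m₁⟫ ^ 2)) := by
  have hinner := real_inner_eq_of_orthonormal_pair_of_finrank_eq_two hdim hμ₀ hμ₁ horth
  have hunit : ∀ m : V, ‖m‖ = 1 → ⟪μ₀, m⟫ ^ 2 + ⟪μ₁, m⟫ ^ 2 = 1 := fun m hm => by
    have := hinner m m
    rw [real_inner_self_eq_norm_sq, hm] at this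
    linear_combination -this
  rw [hinner m₀ m₁]
  exact helstrom_le_of_sq_add_sq_eq_one _ _ _ _ ξ (hunit m₀ hm₀) (hunit m₁ hm₁)

/-- In a two-dimensional real inner product space, the probability of error of the
decision rule given by an orthonormal pair of observable vectors `μ₀, μ₁` is at least the
Helstrom probability of error determined by the overlap of the state vectors `m₀, m₁`. -/
theorem prob_error_ge_helstrom_inner {V : Type*}
    [NormedAddCommGroup V] [InnerProductSpace ℝ V]
    (hdim : Module.finrank ℝ V = 2)
    (m₀ m₁ μ₀ μ₁ : V) (hm₀ : ‖m₀‖ = 1) (hm₁ : ‖m₁‖ = 1)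
    (hμ₀ : ‖μ₀‖ = 1) (hμ₁ : ‖μ₁‖ = 1) (horth : ⟪μ₀, μ₁⟫ = 0)
    (ξ : ℝ) (hξ : ξ ∈ Set.Icc (0 : ℝ) 1) :
    ξ * ⟪μ₁, m₀⟫ ^ 2 + (1 - ξ) * ⟪μ₀, m₁⟫ ^ 2 ≥
      (1 / 2) * (1 - Real.sqrt (1 - 4 * ξ * (1 - ξ) * ⟪m₀, m₁⟫ ^ 2)) :=
  prob_error_ge_helstrom_inner_general hdim m₀ m₁ μ₀ μ₁ hm₀ hm₁ hμ₀ hμ₁ horth ξ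
end

section
/- For all real numbers 0 ≤ m₀ ≤ m₁ and every natural number k ≥ 1, 1 − e^{−(m₁−m₀)} ≥ (1/(k−1)!)·∫_{m₀}^{m₁} t^{k−1} e^{−t} dt. -/
/-!
With `F(m) = e^{-m} ∑_{j ≤ n} m^j / j!` (the Poisson distribution function with mean `m` at `n`),
one has `F' (t) = -t^n e^{-t} / n!`, so the left-hand integral divided by `n!` is `F(m₀) - F(m₁)`.
Since the partial exponential sum `S` is monotone on `[0, ∞)`,
`F(m₀) - F(m₁) ≤ S(m₀) (e^{-m₀} - e^{-m₁}) = F(m₀) (1 - e^{-(m₁ - m₀)})`, and `F(m₀) ≤ 1`.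
-/

open Real Finset Nat

noncomputable section

def poissonCDF (m : ℝ) (n : ℕ) : ℝ := exp (-m) * ∑ j ∈ range (n + 1), m ^ j / j !

theorem hasDerivAt_sum_range_succ_pow_div_factorial (n : ℕ) (t : ℝ) :
    HasDerivAt (fun x : ℝ => ∑ j ∈ range (n + 1), x ^ j / j !)
      (∑ j ∈ range n, t ^ j / j !) t := by
  induction n with
  | zero => simpa using hasDerivAt_const t (1 : ℝ)
  | succ n ih =>
    have hpow : HasDerivAt (fun x : ℝ => x ^ (n + 1) / (n + 1)!) (t ^ n / n !) t := by
      refine ((hasDerivAt_pow (n + 1) t).div_const ((n + 1)! : ℝ)).congr_deriv ?_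
      rw [factorial_succ]
      push_cast
      field_simp
    simp only [sum_range_succ _ (n + 1)]
    exact (ih.add hpow).congr_deriv (sum_range_succ _ n).symm

theorem hasDerivAt_poissonCDF (n : ℕ) (t : ℝ) :
    HasDerivAt (poissonCDF · n) (-(t ^ n * exp (-t) / n !)) t := by
  have hexp : HasDerivAt (fun x : ℝ => exp (-x)) (-exp (-t)) t := by
    simpa using (hasDerivAt_neg t).exp
  refine (hexp.mul (hasDerivAt_sum_range_succ_pow_div_factorial n t)).congr_deriv ?_
  rw [sum_range_succ]
  ring

theorem integral_pow_mul_exp_neg_div_factorial (n : ℕ) (a b : ℝ) :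
    1 / (n ! : ℝ) * ∫ t in a..b, t ^ n * exp (-t) = poissonCDF a n - poissonCDF b n := by
  have hF : ∀ t ∈ Set.uIcc a b, HasDerivAt (fun x => -(n ! : ℝ) * poissonCDF x n)
      (t ^ n * exp (-t)) t := fun t _ => by
    refine ((hasDerivAt_poissonCDF n t).const_mul (-(n ! : ℝ))).congr_deriv ?_
    field_simp
  have hint : IntervalIntegrable (fun t => t ^ n * exp (-t)) MeasureTheory.volume a b :=
    (by fun_prop : Continuous _).intervalIntegrable _ _
  rw [intervalIntegral.integral_eq_sub_of_hasDerivAt hF hint]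
  field_simp
  ring

theorem poissonCDF_le_one {m : ℝ} (hm : 0 ≤ m) (n : ℕ) : poissonCDF m n ≤ 1 := by
  calc poissonCDF m n ≤ exp (-m) * exp m :=
        mul_le_mul_of_nonneg_left (sum_le_exp_of_nonneg hm _) (exp_pos _).le
    _ = 1 := by rw [← exp_add, neg_add_cancel, exp_zero]

theorem poissonCDF_sub_le {m₀ m₁ : ℝ} (hm₀ : 0 ≤ m₀) (hm : m₀ ≤ m₁) (n : ℕ) :
    poissonCDF m₀ n - poissonCDF m₁ n ≤ 1 - exp (-(m₁ - m₀)) := by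
  set S : ℝ → ℝ := fun x => ∑ j ∈ range (n + 1), x ^ j / (j !)
  have hS : S m₀ ≤ S m₁ := sum_le_sum fun j _ => by gcongr
  have hgap : 0 ≤ 1 - exp (-(m₁ - m₀)) := sub_nonneg.2 (exp_le_one_iff.2 (by linarith))
  calc poissonCDF m₀ n - poissonCDF m₁ n ≤ exp (-m₀) * S m₀ - exp (-m₁) * S m₀ := by
        unfold poissonCDF
        gcongr
    _ = poissonCDF m₀ n * (1 - exp (-(m₁ - m₀))) := by
        have hexp : exp (-m₁) = exp (-m₀) * exp (-(m₁ - m₀)) := by rw [← exp_add]; ring_nf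
        rw [poissonCDF, hexp]
        ring
    _ ≤ 1 - exp (-(m₁ - m₀)) := mul_le_of_le_one_left hgap (poissonCDF_le_one hm₀ n)

end

theorem one_sub_exp_ge_gamma_integral_general (m₀ m₁ : ℝ) (hm₀ : 0 ≤ m₀) (hm : m₀ ≤ m₁)
    (k : ℕ) :
    1 - Real.exp (-(m₁ - m₀)) ≥
      (1 / (Nat.factorial (k - 1))) * ∫ t in m₀..m₁, t ^ (k - 1) * Real.exp (-t) := by
  rw [integral_pow_mul_exp_neg_div_factorial]
  exact poissonCDF_sub_le hm₀ hm (k - 1)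

/-- The key inequality: `1 - e^{-(m₁-m₀)}` dominates the difference of regularized upper
incomplete Gamma functions. -/
theorem one_sub_exp_ge_gamma_integral (m₀ m₁ : ℝ) (hm₀ : 0 ≤ m₀) (hm : m₀ ≤ m₁)
    (k : ℕ) (hk : 1 ≤ k) :
    1 - Real.exp (-(m₁ - m₀)) ≥
      (1 / (Nat.factorial (k - 1))) * ∫ t in m₀..m₁, t ^ (k - 1) * Real.exp (-t) :=
  one_sub_exp_ge_gamma_integral_general m₀ m₁ hm₀ hm k
end

section
/- For all real numbers 0 ≤ m₀ ≤ m₁ and every natural number k ≥ 1, ∑_{x=0}^{k-1} (Poi(x;m₀) − Poi(x;m₁)) ≤ 1 − e^{−(m₁−m₀)}. -/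
/-- The difference at threshold `k` between the Poisson cumulative distribution functions
with means `m₀ ≤ m₁` is at most `1 - e^{-(m₁-m₀)}`. -/
theorem poisson_cdf_diff_le (m₀ m₁ : ℝ) (hm₀ : 0 ≤ m₀) (hm : m₀ ≤ m₁)
    (k : ℕ) (hk : 1 ≤ k) :
    ∑ x ∈ Finset.range k, (poi m₀ x - poi m₁ x) ≤ 1 - Real.exp (-(m₁ - m₀)) := by
  set c := Real.exp (-(m₁ - m₀)) with hc
  have hc1 : c ≤ 1 := by
    rw [hc]
    calc Real.exp (-(m₁ - m₀)) ≤ Real.exp 0 := by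
          apply Real.exp_le_exp.mpr; linarith
      _ = 1 := Real.exp_zero
  have key : ∀ x : ℕ, poi m₀ x - poi m₁ x ≤ (1 - c) * poi m₀ x := by
    intro x
    have h1 : c * poi m₀ x ≤ poi m₁ x := by
      unfold poi
      rw [hc, div_eq_mul_inv, div_eq_mul_inv]
      rw [show Real.exp (-(m₁ - m₀)) * (Real.exp (-m₀) * m₀ ^ x * (↑x.factorial)⁻¹)
          = Real.exp (-m₁) * m₀ ^ x * (↑x.factorial)⁻¹ by
        rw [← mul_assoc, ← mul_assoc, ← Real.exp_add]; ring_nf]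
      have : m₀ ^ x ≤ m₁ ^ x := pow_le_pow_left₀ hm₀ hm x
      have hf : (0:ℝ) < (x.factorial : ℝ) := by positivity
      have he : (0:ℝ) < Real.exp (-m₁) := Real.exp_pos _
      apply mul_le_mul_of_nonneg_right _ (by positivity)
      exact mul_le_mul_of_nonneg_left this he.le
    nlinarith
  have hsum : ∑ x ∈ Finset.range k, poi m₀ x ≤ 1 := by
    unfold poi
    have h2 : ∑ x ∈ Finset.range k, Real.exp (-m₀) * m₀ ^ x / (x.factorial : ℝ)
        = Real.exp (-m₀) * ∑ x ∈ Finset.range k, m₀ ^ x / (x.factorial : ℝ) := by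
      rw [Finset.mul_sum]; congr 1; ext x; ring
    rw [h2]
    have h3 : ∑ x ∈ Finset.range k, m₀ ^ x / (x.factorial : ℝ) ≤ Real.exp m₀ :=
      Real.sum_le_exp_of_nonneg hm₀ k
    calc Real.exp (-m₀) * ∑ x ∈ Finset.range k, m₀ ^ x / (x.factorial : ℝ)
        ≤ Real.exp (-m₀) * Real.exp m₀ := by
          exact mul_le_mul_of_nonneg_left h3 (Real.exp_pos _).le
      _ = 1 := by rw [← Real.exp_add]; simp
  calc ∑ x ∈ Finset.range k, (poi m₀ x - poi m₁ x)
      ≤ ∑ x ∈ Finset.range k, (1 - c) * poi m₀ x :=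
        Finset.sum_le_sum fun x _ => key x
    _ = (1 - c) * ∑ x ∈ Finset.range k, poi m₀ x := by rw [Finset.mul_sum]
    _ ≤ (1 - c) * 1 := mul_le_mul_of_nonneg_left hsum (by linarith)
    _ = 1 - c := mul_one _
end

section
/- Let S be a finite type, let p₀, p₁ : S → ℝ be probability mass functions (p_i(x) ≥ 0 for all x and ∑_x p_i(x) = 1), let A ⊆ S, and let ξ ∈ [0,1]. Set κ = (∑_{x∈S} √(p₀(x)·p₁(x)))². Then ξ·∑_{x∈A} p₀(x) + (1 − ξ)·(1 − ∑_{x∈A} p₁(x)) ≥ (1/2)·(1 − √(1 − 4ξ(1 − ξ)·κ)). -/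
/-!
Weight the two hypotheses by their priors, `a = ξ p₀` and `b = (1 - ξ) p₁`. Any decision region
errs with probability `∑_A a + ∑_{Aᶜ} b ≥ ∑ min (a, b) = (1 - ∑ |a - b|) / 2`, so it suffices to
bound the total variation `∑ |a - b|`. Writing `|a - b| = |√a - √b| (√a + √b)`, Cauchy–Schwarz
gives `(∑ |a - b|)² ≤ (1 - 2c) (1 + 2c)` with `c = ∑ √(a b) = √(ξ (1 - ξ) κ)`.
-/

open Finset

section SumMin

variable {ι : Type*}

theorem sum_min_le_sum_add_sum_compl {M : Type*} [AddCommMonoid M] [LinearOrder M]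
    [IsOrderedAddMonoid M] [Fintype ι] [DecidableEq ι] (a b : ι → M) (A : Finset ι) :
    ∑ x, min (a x) (b x) ≤ ∑ x ∈ A, a x + ∑ x ∈ Aᶜ, b x := by
  rw [← sum_add_sum_compl A fun x => min (a x) (b x)]
  gcongr with x
  · exact min_le_left _ _
  · exact min_le_right _ _

theorem two_mul_sum_min_eq (s : Finset ι) (a b : ι → ℝ) :
    2 * ∑ x ∈ s, min (a x) (b x) = ∑ x ∈ s, a x + ∑ x ∈ s, b x - ∑ x ∈ s, |a x - b x| := by
  have hmin : ∀ x, 2 * min (a x) (b x) = a x + b x - |a x - b x| := fun x => by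
    rw [← max_sub_min_eq_abs', ← min_add_max (a x) (b x)]
    ring
  rw [mul_sum, ← sum_add_distrib, ← sum_sub_distrib]
  exact sum_congr rfl fun x _ => hmin x

end SumMin

theorem Real.abs_sub_eq_abs_sqrt_sub_mul_sqrt_add {a b : ℝ} (ha : 0 ≤ a) (hb : 0 ≤ b) :
    |a - b| = |√a - √b| * (√a + √b) := by
  rw [← abs_of_nonneg (add_nonneg (Real.sqrt_nonneg a) (Real.sqrt_nonneg b)), ← abs_mul]
  congr 1
  nlinarith [Real.sq_sqrt ha, Real.sq_sqrt hb]

section Overlap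

variable {ι : Type*} (s : Finset ι) {a b : ι → ℝ}

theorem sum_sq_sqrt_add_sqrt (ha : ∀ x ∈ s, 0 ≤ a x) (hb : ∀ x ∈ s, 0 ≤ b x) :
    ∑ x ∈ s, (√(a x) + √(b x)) ^ 2 =
      ∑ x ∈ s, a x + ∑ x ∈ s, b x + 2 * ∑ x ∈ s, √(a x * b x) := by
  rw [mul_sum, ← sum_add_distrib, ← sum_add_distrib]
  refine sum_congr rfl fun x hx => ?_
  rw [add_sq, Real.sq_sqrt (ha x hx), Real.sq_sqrt (hb x hx), Real.sqrt_mul (ha x hx)]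
  ring

theorem sum_sq_sqrt_sub_sqrt (ha : ∀ x ∈ s, 0 ≤ a x) (hb : ∀ x ∈ s, 0 ≤ b x) :
    ∑ x ∈ s, (√(a x) - √(b x)) ^ 2 =
      ∑ x ∈ s, a x + ∑ x ∈ s, b x - 2 * ∑ x ∈ s, √(a x * b x) := by
  rw [mul_sum, ← sum_add_distrib, ← sum_sub_distrib]
  refine sum_congr rfl fun x hx => ?_
  rw [sub_sq, Real.sq_sqrt (ha x hx), Real.sq_sqrt (hb x hx), Real.sqrt_mul (ha x hx)]
  ring

theorem sq_sum_abs_sub_le (ha : ∀ x ∈ s, 0 ≤ a x) (hb : ∀ x ∈ s, 0 ≤ b x) :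
    (∑ x ∈ s, |a x - b x|) ^ 2 ≤
      (∑ x ∈ s, a x + ∑ x ∈ s, b x) ^ 2 - 4 * (∑ x ∈ s, √(a x * b x)) ^ 2 := by
  have hfactor : ∑ x ∈ s, |a x - b x| = ∑ x ∈ s, |√(a x) - √(b x)| * (√(a x) + √(b x)) :=
    sum_congr rfl fun x hx => Real.abs_sub_eq_abs_sqrt_sub_mul_sqrt_add (ha x hx) (hb x hx)
  calc (∑ x ∈ s, |a x - b x|) ^ 2
      ≤ (∑ x ∈ s, |√(a x) - √(b x)| ^ 2) * ∑ x ∈ s, (√(a x) + √(b x)) ^ 2 := by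
        rw [hfactor]
        exact sum_mul_sq_le_sq_mul_sq _ _ _
    _ = _ := by
        simp only [sq_abs]
        rw [sum_sq_sqrt_sub_sqrt s ha hb, sum_sq_sqrt_add_sqrt s ha hb]
        ring

theorem sub_sqrt_le_two_mul_sum_min (ha : ∀ x ∈ s, 0 ≤ a x) (hb : ∀ x ∈ s, 0 ≤ b x) :
    ∑ x ∈ s, a x + ∑ x ∈ s, b x -
        √((∑ x ∈ s, a x + ∑ x ∈ s, b x) ^ 2 - 4 * (∑ x ∈ s, √(a x * b x)) ^ 2) ≤
      2 * ∑ x ∈ s, min (a x) (b x) := by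
  have hTV : ∑ x ∈ s, |a x - b x| ≤
      √((∑ x ∈ s, a x + ∑ x ∈ s, b x) ^ 2 - 4 * (∑ x ∈ s, √(a x * b x)) ^ 2) :=
    Real.le_sqrt_of_sq_le (sq_sum_abs_sub_le s ha hb)
  rw [two_mul_sum_min_eq]
  linarith

end Overlap

/-- The probability of error of any classical decision rule with region of acceptance `A`
is at least the Helstrom (vector) probability of error, where the squared overlap of the
two state vectors is `κ = (∑ x, √(p₀ x * p₁ x))²`. -/
theorem classical_error_ge_helstrom {S : Type*} [Fintype S]
    (p₀ p₁ : S → ℝ) (h₀ : ∀ x, 0 ≤ p₀ x) (h₁ : ∀ x, 0 ≤ p₁ x)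
    (hs₀ : ∑ x, p₀ x = 1) (hs₁ : ∑ x, p₁ x = 1)
    (A : Finset S) (ξ : ℝ) (hξ : ξ ∈ Set.Icc (0 : ℝ) 1) :
    ξ * (∑ x ∈ A, p₀ x) + (1 - ξ) * (1 - ∑ x ∈ A, p₁ x) ≥
      (1 / 2) * (1 - Real.sqrt (1 - 4 * ξ * (1 - ξ) *
        (∑ x, Real.sqrt (p₀ x * p₁ x)) ^ 2)) := by
  classical
  obtain ⟨hξ0, hξ1⟩ := hξ
  have hξ1' : 0 ≤ 1 - ξ := sub_nonneg.2 hξ1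
  have hmass : ∑ x, ξ * p₀ x + ∑ x, (1 - ξ) * p₁ x = 1 := by
    rw [← mul_sum, ← mul_sum, hs₀, hs₁]
    ring
  have hoverlap : (∑ x, √(ξ * p₀ x * ((1 - ξ) * p₁ x))) ^ 2 =
      ξ * (1 - ξ) * (∑ x, √(p₀ x * p₁ x)) ^ 2 := by
    have hrw : ∀ x, √(ξ * p₀ x * ((1 - ξ) * p₁ x)) = √(ξ * (1 - ξ)) * √(p₀ x * p₁ x) :=
      fun x => by
        rw [← Real.sqrt_mul (mul_nonneg hξ0 hξ1')]
        ring_nf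
    simp only [hrw, ← mul_sum, mul_pow, Real.sq_sqrt (mul_nonneg hξ0 hξ1')]
  have herror : ξ * (∑ x ∈ A, p₀ x) + (1 - ξ) * (1 - ∑ x ∈ A, p₁ x) =
      ∑ x ∈ A, ξ * p₀ x + ∑ x ∈ Aᶜ, (1 - ξ) * p₁ x := by
    rw [← mul_sum, ← mul_sum, ← hs₁, ← sum_add_sum_compl A p₁]
    ring
  have hbound := sub_sqrt_le_two_mul_sum_min univ (fun x _ => mul_nonneg hξ0 (h₀ x))
    (fun x _ => mul_nonneg hξ1' (h₁ x))
  rw [hmass, hoverlap, one_pow, ← mul_assoc, ← mul_assoc] at hbound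
  have hmin := sum_min_le_sum_add_sum_compl (fun x => ξ * p₀ x) (fun x => (1 - ξ) * p₁ x) A
  rw [ge_iff_le, herror]
  linarith
end
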